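/- Let G be a Banach Lie group acting smoothly on the right on a Banach manifold M via σ : M × G → M, and let γ ∈ L¹([a,b], 𝔤) have evolution η : [a,b] → G (an absolutely continuous curve with η(a) = e and η̇(t) = η(t).γ(t) for almost all t). Then for each (t₀, y₀) ∈ [a,b] × M, the curve t ↦ σ(y₀, η(t₀)⁻¹ η(t)) is a Carathéodory solution on all of [a,b] to the initial value problem ẏ(t) = γ(t)_♯(y(t)), y(t₀) = y₀, where v_♯(x) := T_e(σ(x,·))(v) is the fundamental vector field of v ∈ 𝔤. -/

import Mathlib

open MeasureTheory
open scoped Manifold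

section

/-- `g : [c,d] → X` is absolutely continuous: it is the indefinite Bochner
integral of an integrable function. -/
def BanachACOn {X : Type*} [NormedAddCommGroup X] [NormedSpace ℝ X]
    (g : ℝ → X) (c d : ℝ) : Prop :=
  ∃ γ : ℝ → X, IntegrableOn γ (Set.Icc c d) ∧
    ∀ t ∈ Set.Icc c d, g t = g c + ∫ s in c..t, γ s

/-- A curve `ζ : [a,b] → N` into a Banach manifold is absolutely continuous:
it is continuous and, locally in charts, absolutely continuous. -/
def MfdACOn {X : Type*} [NormedAddCommGroup X] [NormedSpace ℝ X]
    {N : Type*} [TopologicalSpace N] [ChartedSpace X N]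
    (ζ : ℝ → N) (a b : ℝ) : Prop :=
  ContinuousOn ζ (Set.Icc a b) ∧
  ∀ t₀ ∈ Set.Icc a b, ∃ c d : ℝ, c < d ∧ t₀ ∈ Set.Icc c d ∧
    Set.Icc c d ⊆ Set.Icc a b ∧ Set.Icc c d ∈ nhdsWithin t₀ (Set.Icc a b) ∧
    (∀ t ∈ Set.Icc c d, ζ t ∈ (extChartAt 𝓘(ℝ, X) (ζ t₀)).source) ∧
    BanachACOn (fun t => extChartAt 𝓘(ℝ, X) (ζ t₀) (ζ t)) c d

variable {E : Type*} [NormedAddCommGroup E] [NormedSpace ℝ E] [CompleteSpace E]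
  {G : Type*} [TopologicalSpace G] [ChartedSpace E G] [Group G]
  [LieGroup 𝓘(ℝ, E) (⊤ : ℕ∞) G]

/-- `η` is the (Carathéodory) evolution of the `L¹`-curve `γ` on `[a,b]`:
an absolutely continuous curve with `η a = 1` whose left logarithmic derivative
equals `γ` almost everywhere. -/
def IsL1EvolutionOn (η : ℝ → G) (γ : ℝ → E) (a b : ℝ) : Prop :=
  η a = 1 ∧ MfdACOn (X := E) η a b ∧
  ∀ᵐ t ∂volume, t ∈ Set.Icc a b →
    MDifferentiableAt 𝓘(ℝ, ℝ) 𝓘(ℝ, E) η t ∧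
    (mfderiv 𝓘(ℝ, ℝ) 𝓘(ℝ, E) η t (1 : ℝ) : E) =
      (mfderiv 𝓘(ℝ, E) 𝓘(ℝ, E) (fun h : G => η t * h) 1 (γ t) : E)

variable {F : Type*} [NormedAddCommGroup F] [NormedSpace ℝ F] [CompleteSpace F]
  {M : Type*} [TopologicalSpace M] [ChartedSpace F M]

/-- `ζ` is a Carathéodory solution on `[a,b]` of the initial value problem
`ẏ(t) = γ(t)_♯(y(t))`, `y(t₀) = y₀`, where `v_♯(x) = T_e(σ(x,·))(v)` is the
fundamental vector field of `v` for the right action `σ`. -/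
def IsFundamentalSol (σ : M → G → M) (γ : ℝ → E) (a b t₀ : ℝ) (y₀ : M)
    (ζ : ℝ → M) : Prop :=
  ζ t₀ = y₀ ∧ MfdACOn (X := F) ζ a b ∧
  ∀ᵐ t ∂volume, t ∈ Set.Icc a b →
    MDifferentiableAt 𝓘(ℝ, ℝ) 𝓘(ℝ, F) ζ t ∧
    (mfderiv 𝓘(ℝ, ℝ) 𝓘(ℝ, F) ζ t (1 : ℝ) : F) =
      (mfderiv 𝓘(ℝ, E) 𝓘(ℝ, F) (fun g : G => σ (ζ t) g) 1 (γ t) : F)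

/-! The curve is `Ψ ∘ η` with `Ψ g = σ(y₀, η(t₀)⁻¹ g)` smooth. Since `σ` is a right action,
`σ(Ψ g, ·) = Ψ ∘ (g * ·)`, so by the chain rule `(Ψ ∘ η)' = TΨ(T(η * ·) γ) = T(σ(Ψ ∘ η, ·)) γ`
wherever `η` has left logarithmic derivative `γ`. Absolute continuity survives composition with
the `C¹` map `Ψ`: in charts this is the chain rule `Φ(u t) = Φ(u c) + ∫ Φ'(u s) (u' s) ds` for an
indefinite Bochner integral `u`, obtained by continuous induction on `[c, t]` from the mean value
inequality, which bounds the defect on short intervals by `ε ∫ ‖u'‖`. -/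

open Set Filter Topology intervalIntegral

theorem exists_Icc_subset_of_mem_nhdsWithin_Icc {a b t : ℝ} (hab : a < b) (ht : t ∈ Icc a b)
    {s : Set ℝ} (hs : s ∈ 𝓝[Icc a b] t) :
    ∃ c d : ℝ, c < d ∧ t ∈ Icc c d ∧ Icc c d ⊆ Icc a b ∧ Icc c d ∈ 𝓝[Icc a b] t ∧
      Icc c d ⊆ s := by
  obtain ⟨δ, hδ, hball⟩ := Metric.mem_nhdsWithin_iff.1 hs
  have hI : Icc (max a (t - δ / 2)) (min b (t + δ / 2)) = Icc a b ∩ Icc (t - δ / 2) (t + δ / 2) :=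
    Icc_inter_Icc.symm
  obtain ⟨hat, htb⟩ := ht
  refine ⟨max a (t - δ / 2), min b (t + δ / 2), ?_, ?_, ?_, ?_, ?_⟩
  · exact max_lt (lt_min hab (by linarith)) (lt_min (by linarith) (by linarith))
  · rw [hI]; exact ⟨⟨hat, htb⟩, by linarith, by linarith⟩
  · rw [hI]; exact inter_subset_left
  · rw [hI]; exact inter_mem_nhdsWithin _ (Icc_mem_nhds (by linarith) (by linarith))
  · rw [hI]
    rintro y ⟨hy, hy₁, hy₂⟩
    refine hball ⟨?_, hy⟩
    rw [Metric.mem_ball, Real.dist_eq, abs_lt]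
    constructor <;> linarith

theorem eq_of_forall_eventually_norm_sub_le {Y : Type*} [NormedAddCommGroup Y] {f : ℝ → Y}
    {m : ℝ → ℝ} {c d : ℝ}
    (hf : ContinuousOn f (Icc c d)) (hm : ContinuousOn m (Icc c d))
    (h : ∀ ε > 0, ∀ x ∈ Ico c d, ∀ᶠ z in 𝓝[>] x, ‖f z - f x‖ ≤ ε * (m z - m x)) :
    ∀ t ∈ Icc c d, f t = f c := by
  intro t ht
  have hbound : ∀ ε > 0, ‖f t - f c‖ ≤ ε * (m t - m c) := by
    intro ε hε
    have hclosed : IsClosed {t ∈ Icc c d | ‖f t - f c‖ ≤ ε * (m t - m c)} :=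
      isClosed_Icc.isClosed_le (hf.sub continuousOn_const).norm
        (continuousOn_const.mul (hm.sub continuousOn_const))
    refine IsClosed.Icc_subset_of_forall_mem_nhdsWithin (s := {t | ‖f t - f c‖ ≤ ε * (m t - m c)})
      ?_ (by simp) ?_ ht
    · rwa [inter_comm]
    · rintro x ⟨hxs, hx⟩
      filter_upwards [h ε hε x hx] with z hz
      calc ‖f z - f c‖ ≤ ‖f z - f x‖ + ‖f x - f c‖ := norm_sub_le_norm_sub_add_norm_sub _ _ _
        _ ≤ ε * (m z - m x) + ε * (m x - m c) := add_le_add hz hxs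
        _ = ε * (m z - m c) := by ring
  have hlim : Tendsto (fun ε => ε * (m t - m c)) (𝓝[>] 0) (𝓝 0) := by
    simpa using (tendsto_id.mul_const (m t - m c)).mono_left (nhdsWithin_le_nhds (a := (0 : ℝ)))
  exact sub_eq_zero.1 <| norm_le_zero_iff.1 <|
    ge_of_tendsto hlim (eventually_nhdsWithin_of_forall hbound)

theorem MeasureTheory.IntegrableOn.intervalIntegrable_of_mem_Icc {X : Type*}
    [NormedAddCommGroup X] {g : ℝ → X} {c d x z : ℝ} (hg : IntegrableOn g (Icc c d))
    (hx : x ∈ Icc c d) (hz : z ∈ Icc c d) :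
    IntervalIntegrable g volume x z :=
  (hg.mono_set (uIcc_subset_Icc hx hz)).intervalIntegrable

section AbsolutelyContinuous

variable {X Y : Type*} [NormedAddCommGroup X] [NormedSpace ℝ X]
  [NormedAddCommGroup Y] [NormedSpace ℝ Y]

theorem MeasureTheory.IntegrableOn.integral_interval_sub_left {g : ℝ → X}
    {c d x z : ℝ} (hg : IntegrableOn g (Icc c d)) (hx : x ∈ Icc c d) (hz : z ∈ Icc c d) :
    (∫ s in c..z, g s) - ∫ s in c..x, g s = ∫ s in x..z, g s :=
  have hc : c ∈ Icc c d := ⟨le_rfl, hx.1.trans hx.2⟩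
  intervalIntegral.integral_interval_sub_left (hg.intervalIntegrable_of_mem_Icc hc hz)
    (hg.intervalIntegrable_of_mem_Icc hc hx)

theorem MeasureTheory.IntegrableOn.continuousOn_intervalIntegral {g : ℝ → X} {c d : ℝ}
    (hg : IntegrableOn g (Icc c d)) : ContinuousOn (fun t => ∫ s in c..t, g s) (Icc c d) :=
  (continuousOn_primitive hg).congr fun _ ht => integral_of_le ht.1

theorem MeasureTheory.IntegrableOn.clm_apply_of_continuousOn {A : ℝ → X →L[ℝ] Y} {g : ℝ → X}
    {c d : ℝ} (hg : IntegrableOn g (Icc c d)) (hA : ContinuousOn A (Icc c d)) :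
    IntegrableOn (fun s => A s (g s)) (Icc c d) := by
  obtain ⟨C, hC⟩ := isCompact_Icc.exists_bound_of_continuousOn hA
  exact (ContinuousLinearMap.id ℝ (X →L[ℝ] Y)).integrable_of_bilin_of_bdd_left C
    (hA.aestronglyMeasurable measurableSet_Icc) (ae_restrict_of_forall_mem measurableSet_Icc hC) hg

theorem Convex.norm_comp_sub_sub_integral_le [CompleteSpace X] [CompleteSpace Y] {Φ : X → Y}
    {Φ' : X → X →L[ℝ] Y} {B : Set X} (hB : Convex ℝ B)
    (hΦ : ∀ y ∈ B, HasFDerivWithinAt Φ (Φ' y) B y) {u g : ℝ → X} {x z ε : ℝ} (hxz : x ≤ z)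
    (hmaps : MapsTo u (Icc x z) B) (hΦ' : ∀ y ∈ B, ‖Φ' y - Φ' (u x)‖ ≤ ε)
    (hg : IntervalIntegrable g volume x z)
    (hh : IntervalIntegrable (fun s => Φ' (u s) (g s)) volume x z)
    (hu : u z - u x = ∫ s in x..z, g s) :
    ‖Φ (u z) - Φ (u x) - ∫ s in x..z, Φ' (u s) (g s)‖ ≤ 2 * ε * ∫ s in x..z, ‖g s‖ := by
  have hux : u x ∈ B := hmaps ⟨le_rfl, hxz⟩
  have hε : 0 ≤ ε := (norm_nonneg _).trans (hΦ' _ hux)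
  have hmvi : ‖Φ (u z) - Φ (u x) - Φ' (u x) (u z - u x)‖ ≤ ε * ‖u z - u x‖ :=
    hB.norm_image_sub_le_of_norm_hasFDerivWithin_le' hΦ hΦ' hux (hmaps ⟨hxz, le_rfl⟩)
  have hnorm : ‖u z - u x‖ ≤ ∫ s in x..z, ‖g s‖ := hu ▸ norm_integral_le_integral_norm hxz
  have hlin : Φ' (u x) (u z - u x) = ∫ s in x..z, Φ' (u x) (g s) := by
    rw [hu]; exact ((Φ' (u x)).intervalIntegral_comp_comm hg).symm
  have hΦ'ux : IntervalIntegrable (fun s => Φ' (u x) (g s)) volume x z :=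
    ⟨(Φ' (u x)).integrable_comp hg.1, (Φ' (u x)).integrable_comp hg.2⟩
  have herr : ‖∫ s in x..z, (Φ' (u x) (g s) - Φ' (u s) (g s))‖ ≤ ε * ∫ s in x..z, ‖g s‖ := by
    rw [← intervalIntegral.integral_const_mul]
    refine norm_integral_le_of_norm_le hxz (ae_of_all _ fun s hs => ?_) (hg.norm.const_mul ε)
    calc ‖Φ' (u x) (g s) - Φ' (u s) (g s)‖ = ‖(Φ' (u s) - Φ' (u x)) (g s)‖ := by
          rw [norm_sub_rev, sub_apply]
      _ ≤ ‖Φ' (u s) - Φ' (u x)‖ * ‖g s‖ := ContinuousLinearMap.le_opNorm _ _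
      _ ≤ ε * ‖g s‖ :=
          mul_le_mul_of_nonneg_right (hΦ' _ (hmaps ⟨hs.1.le, hs.2⟩)) (norm_nonneg _)
  calc ‖Φ (u z) - Φ (u x) - ∫ s in x..z, Φ' (u s) (g s)‖
      = ‖(Φ (u z) - Φ (u x) - Φ' (u x) (u z - u x)) +
          ∫ s in x..z, (Φ' (u x) (g s) - Φ' (u s) (g s))‖ := by
        rw [integral_sub hΦ'ux hh, hlin]; abel_nf
    _ ≤ ε * ‖u z - u x‖ + ε * ∫ s in x..z, ‖g s‖ := (norm_add_le _ _).trans (add_le_add hmvi herr)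
    _ ≤ 2 * ε * ∫ s in x..z, ‖g s‖ := by nlinarith [mul_le_mul_of_nonneg_left hnorm hε]

theorem BanachACOn.continuousOn {u : ℝ → X} {c d : ℝ} (hu : BanachACOn u c d) :
    ContinuousOn u (Icc c d) := by
  obtain ⟨g, hg, hug⟩ := hu
  exact (continuousOn_const.add hg.continuousOn_intervalIntegral).congr hug

theorem BanachACOn.mono {u : ℝ → X} {c d c' d' : ℝ} (hu : BanachACOn u c d)
    (h : Icc c' d' ⊆ Icc c d) : BanachACOn u c' d' := by
  obtain ⟨g, hg, hug⟩ := hu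
  refine ⟨g, hg.mono_set h, fun t ht => ?_⟩
  have hc' : c' ∈ Icc c d := h ⟨le_rfl, ht.1.trans ht.2⟩
  have hc : c ∈ Icc c d := ⟨le_rfl, hc'.1.trans hc'.2⟩
  rw [hug t (h ht), hug c' hc', add_assoc,
    integral_add_adjacent_intervals (hg.intervalIntegrable_of_mem_Icc hc hc')
      (hg.intervalIntegrable_of_mem_Icc hc' (h ht))]

theorem BanachACOn.congr {u v : ℝ → X} {c d : ℝ} (hu : BanachACOn u c d)
    (h : EqOn u v (Icc c d)) : BanachACOn v c d := by
  obtain ⟨g, hg, hug⟩ := hu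
  exact ⟨g, hg, fun t ht => by rw [← h ht, ← h ⟨le_rfl, ht.1.trans ht.2⟩]; exact hug t ht⟩

theorem BanachACOn.comp_of_contDiffAt [CompleteSpace X] [CompleteSpace Y] {Φ : X → Y}
    {u : ℝ → X} {c d : ℝ} (hu : BanachACOn u c d)
    (hΦ : ∀ t ∈ Icc c d, ContDiffAt ℝ 1 Φ (u t)) : BanachACOn (Φ ∘ u) c d := by
  have hucont := hu.continuousOn
  obtain ⟨g, hg, hug⟩ := hu
  set Φ' := fderiv ℝ Φ
  have hΦ'u : ContinuousOn (fun t => Φ' (u t)) (Icc c d) := fun t ht =>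
    ((hΦ t ht).continuousAt_fderiv one_ne_zero).comp_continuousWithinAt (hucont t ht)
  have hgn : IntegrableOn (fun s => ‖g s‖) (Icc c d) := hg.norm
  have hh := hg.clm_apply_of_continuousOn hΦ'u
  refine ⟨fun s => Φ' (u s) (g s), hh, fun t ht => ?_⟩
  suffices hconst : ∀ t ∈ Icc c d,
      Φ (u t) - ∫ s in c..t, Φ' (u s) (g s) = Φ (u c) - ∫ s in c..c, Φ' (u s) (g s) by
    simpa only [integral_same, sub_zero, sub_eq_iff_eq_add, Function.comp_apply] using
      hconst t ht
  refine eq_of_forall_eventually_norm_sub_le (m := fun t => ∫ s in c..t, ‖g s‖)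
    (ContinuousOn.sub (fun t ht => ((hΦ t ht).continuousAt.comp_continuousWithinAt (hucont t ht)))
      hh.continuousOn_intervalIntegral)
    hgn.continuousOn_intervalIntegral fun ε hε x hx => ?_
  have hx' : x ∈ Icc c d := Ico_subset_Icc_self hx
  obtain ⟨r, hr, hball⟩ : ∃ r > 0, ∀ y ∈ Metric.ball (u x) r,
      ContDiffAt ℝ 1 Φ y ∧ ‖Φ' y - Φ' (u x)‖ ≤ ε / 2 := by
    refine Metric.eventually_nhds_iff_ball.1 (((hΦ x hx').eventually (by simp)).and ?_)
    exact ((hΦ x hx').continuousAt_fderiv one_ne_zero).eventually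
      (Metric.closedBall_mem_nhds _ (half_pos hε)) |>.mono fun y hy => by
        simpa [dist_eq_norm] using hy
  obtain ⟨τ, hτ, hτu⟩ := Metric.continuousWithinAt_iff.1 (hucont x hx') r hr
  filter_upwards [Ioo_mem_nhdsGT (lt_min hx.2 (lt_add_of_pos_right x hτ))] with z hz
  have hxz : x ≤ z := hz.1.le
  have hz' : z ∈ Icc c d := ⟨hx.1.trans hxz, hz.2.le.trans (min_le_left _ _)⟩
  have hmaps : MapsTo u (Icc x z) (Metric.ball (u x) r) := fun s hs => by
    have := hz.2.trans_le (min_le_right _ _)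
    refine hτu ⟨hx.1.trans hs.1, hs.2.trans hz'.2⟩ ?_
    rw [Real.dist_eq, abs_lt]
    constructor <;> linarith [hs.1, hs.2]
  have hgxz := hg.intervalIntegrable_of_mem_Icc hx' hz'
  have hhxz := hh.intervalIntegrable_of_mem_Icc hx' hz'
  have hlocal := (convex_ball (u x) r).norm_comp_sub_sub_integral_le
    (fun y hy => ((hball y hy).1.differentiableAt one_ne_zero).hasFDerivAt.hasFDerivWithinAt)
    hxz hmaps (fun y hy => (hball y hy).2) hgxz hhxz (by
      rw [hug z hz', hug x hx', add_sub_add_left_eq_sub, hg.integral_interval_sub_left hx' hz'])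
  calc ‖Φ (u z) - (∫ s in c..z, Φ' (u s) (g s)) - (Φ (u x) - ∫ s in c..x, Φ' (u s) (g s))‖
      = ‖Φ (u z) - Φ (u x) - ∫ s in x..z, Φ' (u s) (g s)‖ := by
        rw [← hh.integral_interval_sub_left hx' hz']; congr 1; abel
    _ ≤ 2 * (ε / 2) * ∫ s in x..z, ‖g s‖ := hlocal
    _ = ε * ((∫ s in c..z, ‖g s‖) - ∫ s in c..x, ‖g s‖) := by
        rw [hgn.integral_interval_sub_left hx' hz']
        ring

theorem MfdACOn.comp_contMDiff [CompleteSpace X] [CompleteSpace Y] {N N' : Type*}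
    [TopologicalSpace N] [ChartedSpace X N] [TopologicalSpace N'] [ChartedSpace Y N']
    {Ψ : N → N'} (hΨ : ContMDiff 𝓘(ℝ, X) 𝓘(ℝ, Y) 1 Ψ) {ζ : ℝ → N} {a b : ℝ}
    (hζ : MfdACOn (X := X) ζ a b) : MfdACOn (X := Y) (Ψ ∘ ζ) a b := by
  obtain ⟨hζcont, hζAC⟩ := hζ
  have hcont : ContinuousOn (Ψ ∘ ζ) (Icc a b) := hΨ.continuous.comp_continuousOn hζcont
  refine ⟨hcont, fun t₁ ht₁ => ?_⟩
  obtain ⟨c, d, hcd, -, hsub, hnhds, hsrc, hAC⟩ := hζAC t₁ ht₁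
  set e := extChartAt 𝓘(ℝ, X) (ζ t₁)
  set e' := extChartAt 𝓘(ℝ, Y) (Ψ (ζ t₁))
  set Φ : X → Y := e' ∘ Ψ ∘ e.symm
  have hΦ : ContDiffAt ℝ 1 Φ (e (ζ t₁)) := by
    have := (contMDiffAt_iff.1 (hΨ (ζ t₁))).2
    rwa [ModelWithCorners.range_eq_univ, contDiffWithinAt_univ] at this
  have hgood : Icc c d ∩ (e ∘ ζ) ⁻¹' {y | ContDiffAt ℝ 1 Φ y} ∩ (Ψ ∘ ζ) ⁻¹' e'.source ∈
      𝓝[Icc a b] t₁ :=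
    inter_mem (inter_mem hnhds (((continuousAt_extChartAt _).comp_continuousWithinAt
        (hζcont t₁ ht₁)).preimage_mem_nhdsWithin (hΦ.eventually (by simp))))
      ((hcont t₁ ht₁).preimage_mem_nhdsWithin (extChartAt_source_mem_nhds _))
  have hab : a < b := (hsub ⟨le_rfl, hcd.le⟩).1.trans_lt (hcd.trans_le (hsub ⟨hcd.le, le_rfl⟩).2)
  obtain ⟨c', d', hc'd', ht₁', hsub', hnhds', hgood'⟩ :=
    exists_Icc_subset_of_mem_nhdsWithin_Icc hab ht₁ hgood
  refine ⟨c', d', hc'd', ht₁', hsub', hnhds', fun t ht => (hgood' ht).2, ?_⟩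
  refine ((hAC.mono fun t ht => (hgood' ht).1.1).comp_of_contDiffAt
    fun t ht => (hgood' ht).1.2).congr fun t ht => ?_
  exact congrArg (e' ∘ Ψ) (e.left_inv (hsrc t (hgood' ht).1.1))

end AbsolutelyContinuous

theorem isFundamentalSol_action_evolution_general
    (σ : M → G → M)
    (hσ : ContMDiff (𝓘(ℝ, F).prod 𝓘(ℝ, E)) 𝓘(ℝ, F) (⊤ : ℕ∞)
      (fun p : M × G => σ p.1 p.2))
    (hone : ∀ x : M, σ x 1 = x)
    (hmul : ∀ (x : M) (g h : G), σ x (g * h) = σ (σ x g) h)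
    (a b : ℝ) (γ : ℝ → E)
    (η : ℝ → G) (hη : IsL1EvolutionOn η γ a b)
    (t₀ : ℝ) (y₀ : M) :
    IsFundamentalSol (F := F) σ γ a b t₀ y₀ (fun t => σ y₀ ((η t₀)⁻¹ * η t)) := by
  obtain ⟨-, hηAC, hηderiv⟩ := hη
  set Ψ : G → M := fun g => σ y₀ ((η t₀)⁻¹ * g)
  have hΨ : ContMDiff 𝓘(ℝ, E) 𝓘(ℝ, F) (⊤ : ℕ∞) Ψ :=
    hσ.comp (contMDiff_const.prodMk contMDiff_mul_left)
  refine ⟨by simp [hone], hηAC.comp_contMDiff (hΨ.of_le (by exact_mod_cast le_top)), ?_⟩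
  filter_upwards [hηderiv] with t hderiv ht
  obtain ⟨hηt, hlog⟩ := hderiv ht
  have hΨt : MDifferentiableAt 𝓘(ℝ, E) 𝓘(ℝ, F) Ψ (η t) := hΨ.mdifferentiableAt (by simp)
  have hequiv : (fun g => σ (Ψ (η t)) g) = Ψ ∘ (η t * ·) := by
    funext g
    simp only [Ψ, Function.comp_apply, hmul]
  refine ⟨hΨt.comp t hηt, ?_⟩
  change mfderiv _ _ (Ψ ∘ η) t 1 = mfderiv _ _ (fun g => σ (Ψ (η t)) g) 1 (γ t)
  rw [hequiv, mfderiv_comp_of_eq hΨt mdifferentiableAt_mul_left (mul_one _), mul_one,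
    mfderiv_comp t hΨt hηt]
  exact congrArg (mfderiv 𝓘(ℝ, E) 𝓘(ℝ, F) Ψ (η t)) hlog

/-- Solutions of the fundamental vector field ODE via the evolution: if `γ` is
`L¹` with evolution `η`, then for every `(t₀, y₀)` the curve
`t ↦ σ (y₀, η(t₀)⁻¹ η(t))` is a Carathéodory solution on all of `[a,b]` of the
initial value problem `ẏ(t) = γ(t)_♯(y(t))`, `y(t₀) = y₀`. -/
theorem isFundamentalSol_action_evolution
    (σ : M → G → M)
    (hσ : ContMDiff (𝓘(ℝ, F).prod 𝓘(ℝ, E)) 𝓘(ℝ, F) (⊤ : ℕ∞)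
      (fun p : M × G => σ p.1 p.2))
    (hone : ∀ x : M, σ x 1 = x)
    (hmul : ∀ (x : M) (g h : G), σ x (g * h) = σ (σ x g) h)
    (a b : ℝ) (hab : a < b) (γ : ℝ → E)
    (hγ : IntegrableOn γ (Set.Icc a b))
    (η : ℝ → G) (hη : IsL1EvolutionOn η γ a b)
    (t₀ : ℝ) (ht₀ : t₀ ∈ Set.Icc a b) (y₀ : M) :
    IsFundamentalSol (F := F) σ γ a b t₀ y₀ (fun t => σ y₀ ((η t₀)⁻¹ * η t)) :=
  isFundamentalSol_action_evolution_general σ hσ hone hmul a b γ η hη t₀ y₀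

end
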